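/- arXiv:1609.09438 — 5 statements merged into one kernel-verified Lean document; each statement's English description precedes it below -/
import Mathlib

section
/- Let V be a finite-dimensional complex vector space and let V = E ⊕ F be a direct sum decomposition into subspaces E and F. Let H and H' be Hermitian sesquilinear forms on V such that H is positive definite on E (i.e. H(e,e) > 0 for every nonzero e ∈ E), H' is positive definite on F (i.e. H'(f,f) > 0 for every nonzero f ∈ F), and E is contained in the kernel of H' (i.e. H'(e,v) = 0 for all e ∈ E and v ∈ V). Then there exists a real constant c > 0 such that the Hermitian form H + cH' is positive definite on all of V, i.e. (H + cH')(v,v) > 0 for every nonzero v ∈ V. -/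
/-!
Decompose `v = e + f` with `e ∈ E`, `f ∈ F`. Since `E` lies in the kernel of the Hermitian form
`H'`, we get `H'(v,v) = H'(f,f)`, so `Re H'(v,v) ≥ 0` with equality only on `E`, where `H` is
positive. Hence `Re H'(v,v) > 0` wherever `Re H(v,v) ≤ 0` and `v ≠ 0`. On the (compact) unit
sphere of a coordinate norm, `Re H(v,v)` is bounded below and `Re H'(v,v)` is bounded away from
zero on the closed set where `Re H(v,v) ≤ 0`, which yields `c`; homogeneity extends the
inequality from the sphere to all `v ≠ 0`.
-/

open Metric Set

theorem IsCompact.exists_pos_forall_add_mul_pos {X : Type*} [TopologicalSpace X] {K : Set X}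
    (hK : IsCompact K) {q p : X → ℝ} (hq : Continuous q) (hp : ContinuousOn p K)
    (hp₀ : ∀ x ∈ K, 0 ≤ p x) (hqp : ∀ x ∈ K, q x ≤ 0 → 0 < p x) :
    ∃ c : ℝ, 0 < c ∧ ∀ x ∈ K, 0 < q x + c * p x := by
  obtain ⟨δ, hδ, hδp⟩ := (hK.inter_right (isClosed_Iic.preimage hq)).exists_forall_le'
    (hp.mono inter_subset_left) fun x hx => hqp x hx.1 hx.2
  obtain ⟨m, hm⟩ := hK.bddBelow_image hq.continuousOn
  have hc : 0 < (|m| + 1) / δ := by positivity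
  refine ⟨(|m| + 1) / δ, hc, fun x hx => ?_⟩
  rcases lt_or_ge 0 (q x) with hqx | hqx
  · nlinarith [hp₀ x hx]
  · have hcp : |m| + 1 ≤ (|m| + 1) / δ * p x := by
      rw [div_mul_eq_mul_div, le_div_iff₀ hδ]
      exact mul_le_mul_of_nonneg_left (hδp x ⟨hx, hqx⟩) (by positivity)
    linarith [hm ⟨x, hx, rfl⟩, neg_abs_le m]

theorem LinearMap.exists_pos_forall_add_mul_pos {X : Type*} [NormedAddCommGroup X]
    [NormedSpace ℝ X] [FiniteDimensional ℝ X] (q p : X →ₗ[ℝ] X →ₗ[ℝ] ℝ)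
    (hp₀ : ∀ x, 0 ≤ p x x) (hqp : ∀ x, x ≠ 0 → q x x ≤ 0 → 0 < p x x) :
    ∃ c : ℝ, 0 < c ∧ ∀ x, x ≠ 0 → 0 < q x x + c * p x x := by
  have hcont (B : X →ₗ[ℝ] X →ₗ[ℝ] ℝ) : Continuous fun x => B x x :=
    B.toContinuousBilinearMap.continuous.clm_apply continuous_id
  obtain ⟨c, hc, hcS⟩ := (isCompact_sphere (0 : X) 1).exists_pos_forall_add_mul_pos (hcont q)
    (hcont p).continuousOn (fun x _ => hp₀ x)
    fun x hx => hqp x (ne_zero_of_mem_unit_sphere ⟨x, hx⟩)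
  refine ⟨c, hc, fun x hx => ?_⟩
  have hx' : 0 < ‖x‖ := norm_pos_iff.2 hx
  set y := ‖x‖⁻¹ • x with hy
  have hyS : y ∈ sphere (0 : X) 1 := by simp [y, norm_smul, hx'.ne']
  have hcy := hcS y hyS
  calc 0 < ‖x‖ ^ 2 * (q y y + c * p y y) := by positivity
    _ = q x x + c * p x x := by
      simp only [hy, map_smul, LinearMap.smul_apply, smul_eq_mul]
      field_simp

namespace LinearMap

variable {V : Type*} [AddCommGroup V] [Module ℂ V]

def reBilin (B : V →ₗ[ℂ] V →ₛₗ[starRingEnd ℂ] ℂ) : V →ₗ[ℝ] V →ₗ[ℝ] ℝ :=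
  mk₂ ℝ (fun u v => (B u v).re) (by simp) (fun r u v => by simp [← Complex.coe_smul])
    (by simp) (fun r u v => by simp [← Complex.coe_smul])

@[simp]
theorem reBilin_apply (B : V →ₗ[ℂ] V →ₛₗ[starRingEnd ℂ] ℂ) (u v : V) :
    B.reBilin u v = (B u v).re :=
  rfl

variable {E F : Submodule ℂ V} {B : V →ₗ[ℂ] V →ₛₗ[starRingEnd ℂ] ℂ}

theorem exists_mem_apply_self_eq_of_isCompl (hEF : IsCompl E F)
    (hB : ∀ u v, starRingEnd ℂ (B u v) = B v u) (hker : ∀ e ∈ E, ∀ v, B e v = 0) (v : V) :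
    ∃ e ∈ E, ∃ f ∈ F, v = e + f ∧ B v v = B f f := by
  obtain ⟨e, he, f, hf, rfl⟩ := Submodule.mem_sup.1 (hEF.sup_eq_top ▸ Submodule.mem_top (x := v))
  refine ⟨e, he, f, hf, rfl, ?_⟩
  have hfe : B f e = 0 := by rw [← hB, hker e he, map_zero]
  simp [hker e he, hfe]

theorem re_apply_self_nonneg_of_isCompl (hEF : IsCompl E F)
    (hB : ∀ u v, starRingEnd ℂ (B u v) = B v u) (hBF : ∀ f ∈ F, f ≠ 0 → 0 < (B f f).re)
    (hker : ∀ e ∈ E, ∀ v, B e v = 0) (v : V) : 0 ≤ (B v v).re := by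
  obtain ⟨e, -, f, hf, -, hv⟩ := exists_mem_apply_self_eq_of_isCompl hEF hB hker v
  rcases eq_or_ne f 0 with rfl | hf₀
  · simp [hv]
  · exact hv ▸ (hBF f hf hf₀).le

theorem re_apply_self_pos_of_isCompl (hEF : IsCompl E F)
    (hB : ∀ u v, starRingEnd ℂ (B u v) = B v u) (hBF : ∀ f ∈ F, f ≠ 0 → 0 < (B f f).re)
    (hker : ∀ e ∈ E, ∀ v, B e v = 0) {v : V} (hvE : v ∉ E) : 0 < (B v v).re := by
  obtain ⟨e, he, f, hf, rfl, hv⟩ := exists_mem_apply_self_eq_of_isCompl hEF hB hker v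
  rw [hv]
  refine hBF f hf fun hf₀ => hvE ?_
  simpa [hf₀] using he

end LinearMap

open LinearMap in
theorem stmt_0_general (V : Type*) [AddCommGroup V] [Module ℂ V] [FiniteDimensional ℂ V]
    (E F : Submodule ℂ V) (hEF : IsCompl E F)
    (H H' : V →ₗ[ℂ] V →ₛₗ[starRingEnd ℂ] ℂ)
    (hH'herm : ∀ u v : V, (starRingEnd ℂ) (H' u v) = H' v u)
    (hHE : ∀ e ∈ E, e ≠ 0 → 0 < (H e e).re)
    (hH'F : ∀ f ∈ F, f ≠ 0 → 0 < (H' f f).re)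
    (hker : ∀ e ∈ E, ∀ v : V, H' e v = 0) :
    ∃ c : ℝ, 0 < c ∧ ∀ v : V, v ≠ 0 → 0 < (H v v + (c : ℂ) * H' v v).re := by
  let φ : (Fin (Module.finrank ℂ V) → ℂ) ≃ₗ[ℝ] V :=
    (Module.finBasis ℂ V).equivFun.symm.restrictScalars ℝ
  obtain ⟨c, hc, hpos⟩ := exists_pos_forall_add_mul_pos
    (H.reBilin.compl₁₂ φ.toLinearMap φ.toLinearMap)
    (H'.reBilin.compl₁₂ φ.toLinearMap φ.toLinearMap)
    (fun w => re_apply_self_nonneg_of_isCompl hEF hH'herm hH'F hker (φ w))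
    fun w hw hHw => re_apply_self_pos_of_isCompl hEF hH'herm hH'F hker
      fun hE => hHw.not_gt (hHE _ hE (φ.map_ne_zero_iff.2 hw))
  refine ⟨c, hc, fun v hv => ?_⟩
  simpa using hpos (φ.symm v) (by simpa using hv)

/-- Let `V` be a finite-dimensional complex vector space with a direct
sum decomposition `V = E ⊕ F`. Let `H, H'` be Hermitian sesquilinear forms on `V`
(ℂ-linear in the first argument, conjugate-linear in the second) such that `H` is
positive definite on `E`, `H'` is positive definite on `F`, and `E ⊆ ker H'`.
Then there is a constant `c > 0` such that `H + c H'` is positive definite on `V`. -/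
theorem stmt_0 (V : Type*) [AddCommGroup V] [Module ℂ V] [FiniteDimensional ℂ V]
    (E F : Submodule ℂ V) (hEF : IsCompl E F)
    (H H' : V →ₗ[ℂ] V →ₛₗ[starRingEnd ℂ] ℂ)
    (hHherm : ∀ u v : V, (starRingEnd ℂ) (H u v) = H v u)
    (hH'herm : ∀ u v : V, (starRingEnd ℂ) (H' u v) = H' v u)
    (hHE : ∀ e ∈ E, e ≠ 0 → 0 < (H e e).re)
    (hH'F : ∀ f ∈ F, f ≠ 0 → 0 < (H' f f).re)
    (hker : ∀ e ∈ E, ∀ v : V, H' e v = 0) :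
    ∃ c : ℝ, 0 < c ∧ ∀ v : V, v ≠ 0 → 0 < (H v v + (c : ℂ) * H' v v).re :=
  stmt_0_general V E F hEF H H' hH'herm hHE hH'F hker
end

section
/- Let P be a compact topological space, V a finite-dimensional complex vector space, and V = E ⊕ F a direct sum decomposition into subspaces E and F. Let H, H' : P → (sesquilinear forms on V) be continuous families such that for every p ∈ P: H(p) and H'(p) are Hermitian, H(p) is positive definite on E, H'(p) is positive definite on F, and H'(p)(e,v) = 0 for all e ∈ E, v ∈ V. Then there exists a single real constant c > 0 such that H(p) + cH'(p) is positive definite on V for every p ∈ P. -/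
/-!
Write `v = e + f` with `e ∈ E`, `f ∈ F`. Since `E` lies in the kernel of the Hermitian form
`H' p`, we get `H' p v v = H' p f f`, so `H' p` is positive semidefinite and, for `v ≠ 0`,
either `H' p v v > 0` or `v ∈ E` and then `H p v v > 0`. On the compact space of pairs
`(p, v)` with `v` on a unit sphere, the open sets `{H + (n + 1) H' > 0}` increase with `n`
and cover, so one of them is everything; homogeneity removes the normalisation of `v`.
-/

theorem exists_pos_forall_pos_add_mul {X : Type*} [TopologicalSpace X] [CompactSpace X]
    {q q' : X → ℝ} (hq : Continuous q) (hq' : Continuous q') (hq'_nonneg : ∀ x, 0 ≤ q' x)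
    (h : ∀ x, 0 < q x ∨ 0 < q' x) : ∃ c : ℝ, 0 < c ∧ ∀ x, 0 < q x + c * q' x := by
  let U : ℕ → Set X := fun n => {x | 0 < q x + (n + 1) * q' x}
  have hU_open : ∀ n, IsOpen (U n) := fun n => isOpen_lt continuous_const (by fun_prop)
  have hU_mono : Monotone U := by
    intro m n hmn x (hx : 0 < q x + (m + 1) * q' x)
    have : (m : ℝ) ≤ n := Nat.cast_le.mpr hmn
    show 0 < q x + (n + 1) * q' x
    nlinarith [hq'_nonneg x]
  have hU_cover : Set.univ ⊆ ⋃ n, U n := by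
    intro x _
    rcases h x with hx | hx
    · exact Set.mem_iUnion.mpr ⟨0, by simp only [U, Set.mem_ofPred_eq]; nlinarith [hq'_nonneg x]⟩
    · obtain ⟨n, hn⟩ := exists_nat_gt (-q x / q' x)
      refine Set.mem_iUnion.mpr ⟨n, ?_⟩
      have := (div_lt_iff₀ hx).mp hn
      simp only [U, Set.mem_ofPred_eq]
      nlinarith
  obtain ⟨n, hn⟩ := isCompact_univ.elim_directed_cover U hU_open hU_cover hU_mono.directed_le
  exact ⟨n + 1, by positivity, fun x => hn (Set.mem_univ x)⟩

section SesqForm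

variable {V : Type*} [AddCommGroup V] [Module ℂ V]

theorem apply_add_self_eq_of_apply_eq_zero (B : V →ₗ[ℂ] V →ₛₗ[starRingEnd ℂ] ℂ)
    (hB : ∀ u v, starRingEnd ℂ (B u v) = B v u) {e : V} (he : ∀ v, B e v = 0) (f : V) :
    B (e + f) (e + f) = B f f := by
  have hfe : B f e = 0 := by rw [← hB, he, map_zero]
  simp [he, hfe]

theorem re_apply_ofReal_smul_self (B : V →ₗ[ℂ] V →ₛₗ[starRingEnd ℂ] ℂ) (r : ℝ) (u : V) :
    (B ((r : ℂ) • u) ((r : ℂ) • u)).re = r ^ 2 * (B u u).re := by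
  simp only [map_smul, LinearMap.smul_apply, LinearMap.map_smulₛₗ, Complex.conj_ofReal,
    smul_eq_mul]
  rw [← mul_assoc, ← Complex.ofReal_mul, Complex.re_ofReal_mul, pow_two]

variable {E F : Submodule ℂ V}

theorem exists_apply_self_eq_of_isCompl (hEF : IsCompl E F)
    (B : V →ₗ[ℂ] V →ₛₗ[starRingEnd ℂ] ℂ) (hB : ∀ u v, starRingEnd ℂ (B u v) = B v u)
    (hker : ∀ e ∈ E, ∀ v, B e v = 0) (v : V) :
    ∃ e ∈ E, ∃ f ∈ F, v = e + f ∧ B v v = B f f := by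
  obtain ⟨e, he, f, hf, rfl⟩ := Submodule.mem_sup.mp (hEF.sup_eq_top ▸ Submodule.mem_top : v ∈ E ⊔ F)
  exact ⟨e, he, f, hf, rfl, apply_add_self_eq_of_apply_eq_zero B hB (hker e he) f⟩

theorem re_apply_self_nonneg_of_isCompl (hEF : IsCompl E F)
    (B : V →ₗ[ℂ] V →ₛₗ[starRingEnd ℂ] ℂ) (hB : ∀ u v, starRingEnd ℂ (B u v) = B v u)
    (hBF : ∀ f ∈ F, f ≠ 0 → 0 < (B f f).re) (hker : ∀ e ∈ E, ∀ v, B e v = 0) (v : V) :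
    0 ≤ (B v v).re := by
  obtain ⟨e, -, f, hf, -, hv⟩ := exists_apply_self_eq_of_isCompl hEF B hB hker v
  rcases eq_or_ne f 0 with rfl | hf0
  · simp [hv]
  · exact hv ▸ (hBF f hf hf0).le

theorem re_apply_self_pos_or_of_isCompl (hEF : IsCompl E F)
    (A B : V →ₗ[ℂ] V →ₛₗ[starRingEnd ℂ] ℂ) (hAE : ∀ e ∈ E, e ≠ 0 → 0 < (A e e).re)
    (hB : ∀ u v, starRingEnd ℂ (B u v) = B v u) (hBF : ∀ f ∈ F, f ≠ 0 → 0 < (B f f).re)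
    (hker : ∀ e ∈ E, ∀ v, B e v = 0) {v : V} (hv : v ≠ 0) :
    0 < (A v v).re ∨ 0 < (B v v).re := by
  obtain ⟨e, he, f, hf, rfl, hv'⟩ := exists_apply_self_eq_of_isCompl hEF B hB hker v
  rcases eq_or_ne f 0 with rfl | hf0
  · rw [add_zero] at hv ⊢
    exact Or.inl (hAE e he hv)
  · exact Or.inr (hv' ▸ hBF f hf hf0)

variable {ι : Type*} [Fintype ι]

theorem continuous_apply_equivFun_symm_self {P : Type*} [TopologicalSpace P]
    (b : Module.Basis ι ℂ V) (G : P → V →ₗ[ℂ] V →ₛₗ[starRingEnd ℂ] ℂ)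
    (hG : ∀ v w, Continuous fun p => G p v w) :
    Continuous fun z : P × (ι → ℂ) => G z.1 (b.equivFun.symm z.2) (b.equivFun.symm z.2) := by
  have hexp : ∀ p x, G p (b.equivFun.symm x) (b.equivFun.symm x)
      = ∑ i, ∑ j, x i * starRingEnd ℂ (x j) * G p (b i) (b j) := by
    intro p x
    simp only [Module.Basis.equivFun_symm_apply, map_sum, map_smul, LinearMap.map_smulₛₗ,
      LinearMap.sum_apply, LinearMap.smul_apply, smul_eq_mul, Finset.mul_sum, mul_assoc]
    rw [Finset.sum_comm]
    exact Finset.sum_congr rfl fun i _ => Finset.sum_congr rfl fun j _ => mul_left_comm _ _ _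
  simp_rw [hexp]
  fun_prop

theorem exists_eq_ofReal_smul_equivFun_symm_of_ne_zero (b : Module.Basis ι ℂ V) {v : V}
    (hv : v ≠ 0) : ∃ r : ℝ, 0 < r ∧ ∃ y ∈ Metric.sphere (0 : ι → ℂ) 1,
      v = (r : ℂ) • b.equivFun.symm y := by
  set x := b.equivFun v
  have hr : 0 < ‖x‖ := norm_pos_iff.mpr (by simpa [x] using hv)
  refine ⟨‖x‖, hr, ((‖x‖⁻¹ : ℝ) : ℂ) • x, ?_, ?_⟩
  · simp [norm_smul, hr.ne']
  · rw [map_smul, smul_smul, ← Complex.ofReal_mul, mul_inv_cancel₀ hr.ne']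
    simp [x]

end SesqForm

theorem stmt_1_general (P : Type*) [TopologicalSpace P] [CompactSpace P]
    (V : Type*) [AddCommGroup V] [Module ℂ V] [FiniteDimensional ℂ V]
    (E F : Submodule ℂ V) (hEF : IsCompl E F)
    (H H' : P → V →ₗ[ℂ] V →ₛₗ[starRingEnd ℂ] ℂ)
    (hHcont : ∀ v w : V, Continuous fun p => H p v w)
    (hH'cont : ∀ v w : V, Continuous fun p => H' p v w)
    (hH'herm : ∀ p : P, ∀ u v : V, (starRingEnd ℂ) (H' p u v) = H' p v u)
    (hHE : ∀ p : P, ∀ e ∈ E, e ≠ 0 → 0 < (H p e e).re)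
    (hH'F : ∀ p : P, ∀ f ∈ F, f ≠ 0 → 0 < (H' p f f).re)
    (hker : ∀ p : P, ∀ e ∈ E, ∀ v : V, H' p e v = 0) :
    ∃ c : ℝ, 0 < c ∧ ∀ p : P, ∀ v : V, v ≠ 0 → 0 < (H p v v + (c : ℂ) * H' p v v).re := by
  let b := Module.finBasis ℂ V
  let q : (G : P → V →ₗ[ℂ] V →ₛₗ[starRingEnd ℂ] ℂ) →
      P × Metric.sphere (0 : Fin (Module.finrank ℂ V) → ℂ) 1 → ℝ :=
    fun G z => (G z.1 (b.equivFun.symm z.2) (b.equivFun.symm z.2)).re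
  have hq : ∀ G : P → V →ₗ[ℂ] V →ₛₗ[starRingEnd ℂ] ℂ,
      (∀ v w, Continuous fun p => G p v w) → Continuous (q G) := fun G hG =>
    Complex.continuous_re.comp <| (continuous_apply_equivFun_symm_self b G hG).comp <|
      continuous_fst.prodMk (continuous_subtype_val.comp continuous_snd)
  have hne : ∀ z : P × Metric.sphere (0 : Fin (Module.finrank ℂ V) → ℂ) 1,
      b.equivFun.symm z.2 ≠ 0 := fun z =>
    b.equivFun.symm.map_ne_zero_iff.mpr (ne_zero_of_mem_unit_sphere z.2)
  obtain ⟨c, hc, hpos⟩ := exists_pos_forall_pos_add_mul (hq H hHcont) (hq H' hH'cont)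
    (fun z => re_apply_self_nonneg_of_isCompl hEF _ (hH'herm z.1) (hH'F z.1) (hker z.1) _)
    (fun z => re_apply_self_pos_or_of_isCompl hEF _ _ (hHE z.1) (hH'herm z.1) (hH'F z.1)
      (hker z.1) (hne z))
  refine ⟨c, hc, fun p v hv => ?_⟩
  obtain ⟨r, hr, y, hy, rfl⟩ := exists_eq_ofReal_smul_equivFun_symm_of_ne_zero b hv
  have := hpos (p, ⟨y, hy⟩)
  rw [Complex.add_re, Complex.re_ofReal_mul, re_apply_ofReal_smul_self,
    re_apply_ofReal_smul_self]
  nlinarith [pow_pos hr 2]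

/-- Compact-family version of Statement 0: for a compact space `P` and
continuous families `H, H'` of Hermitian sesquilinear forms on a finite-dimensional
complex vector space `V = E ⊕ F`, with `H p` positive definite on `E`, `H' p` positive
definite on `F` and `E ⊆ ker (H' p)` for every `p`, there is a single constant `c > 0`
such that `H p + c H' p` is positive definite on `V` for every `p ∈ P`. -/
theorem stmt_1 (P : Type*) [TopologicalSpace P] [CompactSpace P]
    (V : Type*) [AddCommGroup V] [Module ℂ V] [FiniteDimensional ℂ V]
    (E F : Submodule ℂ V) (hEF : IsCompl E F)
    (H H' : P → V →ₗ[ℂ] V →ₛₗ[starRingEnd ℂ] ℂ)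
    (hHcont : ∀ v w : V, Continuous fun p => H p v w)
    (hH'cont : ∀ v w : V, Continuous fun p => H' p v w)
    (hHherm : ∀ p : P, ∀ u v : V, (starRingEnd ℂ) (H p u v) = H p v u)
    (hH'herm : ∀ p : P, ∀ u v : V, (starRingEnd ℂ) (H' p u v) = H' p v u)
    (hHE : ∀ p : P, ∀ e ∈ E, e ≠ 0 → 0 < (H p e e).re)
    (hH'F : ∀ p : P, ∀ f ∈ F, f ≠ 0 → 0 < (H' p f f).re)
    (hker : ∀ p : P, ∀ e ∈ E, ∀ v : V, H' p e v = 0) :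
    ∃ c : ℝ, 0 < c ∧ ∀ p : P, ∀ v : V, v ≠ 0 → 0 < (H p v v + (c : ℂ) * H' p v v).re :=
  stmt_1_general P V E F hEF H H' hHcont hH'cont hH'herm hHE hH'F hker
end

section
/- Fix n ≥ 2 and define, on n × n complex matrices, Φ(A) = det(A) • A⁻¹ and Ψ(B) = ((det B).re)^(1/(n−1)) • B⁻¹ (real power of the positive real (det B).re). Then: (i) for every positive definite A, Φ(A) is positive definite and Ψ(Φ(A)) = A; (ii) for every positive definite B, Ψ(B) is positive definite and Φ(Ψ(B)) = B. Consequently Φ is a bijection from the set of positive definite n × n complex matrices onto itself. -/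
open scoped ComplexOrder

/-- `Φ(A) = det A • A⁻¹` (the adjugate, for positive definite `A`). -/
noncomputable def PhiMap (n : ℕ) (A : Matrix (Fin n) (Fin n) ℂ) : Matrix (Fin n) (Fin n) ℂ :=
  A.det • A⁻¹

/-- `Ψ(B) = ((det B).re)^(1/(n-1)) • B⁻¹` (real power of the positive real `(det B).re`). -/
noncomputable def PsiMap (n : ℕ) (B : Matrix (Fin n) (Fin n) ℂ) : Matrix (Fin n) (Fin n) ℂ :=
  ((B.det.re) ^ (1 / ((n : ℝ) - 1)) : ℝ) • B⁻¹

/-! For `d = det A > 0` both maps send `A` to a positive real multiple `c • A⁻¹` of the inverse,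
and `det (c • A⁻¹) = cⁿ / d`, `(c • A⁻¹)⁻¹ = c⁻¹ • A`. Hence `Ψ (Φ A) = (dⁿ⁻¹)^(1/(n-1)) d⁻¹ • A`
and `Φ (Ψ A) = rⁿ⁻¹ d⁻¹ • A` with `r = d^(1/(n-1))`, and both scalars are `1`. -/

namespace Matrix.PosDef

variable {m : Type*} [Fintype m] [DecidableEq m] {A : Matrix m m ℂ}

lemma re_det_pos (hA : A.PosDef) : 0 < A.det.re :=
  (Complex.pos_iff.mp hA.det_pos).1

lemma ofReal_re_det (hA : A.PosDef) : (A.det.re : ℂ) = A.det :=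
  Complex.ext rfl (Complex.pos_iff.mp hA.det_pos).2

lemma re_det_real_smul_inv (hA : A.PosDef) (c : ℝ) :
    (c • A⁻¹).det.re = c ^ Fintype.card m / A.det.re := by
  obtain ⟨d, hd⟩ : ∃ d : ℝ, A.det = d := ⟨_, hA.ofReal_re_det.symm⟩
  rw [det_smul_of_tower, det_nonsing_inv, Ring.inverse_eq_inv', hd, ← Complex.coe_smul,
    smul_eq_mul, ← Complex.ofReal_inv, ← Complex.ofReal_mul, Complex.ofReal_re, Complex.ofReal_re,
    div_eq_mul_inv]

lemma inv_real_smul_inv (hA : A.PosDef) {c : ℝ} (hc : c ≠ 0) : (c • A⁻¹)⁻¹ = c⁻¹ • A :=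
  inv_eq_left_inv <| by
    rw [smul_mul_smul_comm, inv_mul_cancel₀ hc, one_smul,
      mul_nonsing_inv _ ((isUnit_iff_isUnit_det A).mp hA.isUnit)]

end Matrix.PosDef

namespace Real

lemma rpow_one_div_natCast_sub_one_pow {x : ℝ} (hx : 0 ≤ x) {n : ℕ} (hn : 2 ≤ n) :
    (x ^ (1 / ((n : ℝ) - 1))) ^ (n - 1) = x := by
  rw [one_div, ← Nat.cast_pred (by omega)]
  exact rpow_inv_natCast_pow hx (by omega)

lemma pow_natCast_sub_one_rpow_one_div {x : ℝ} (hx : 0 ≤ x) {n : ℕ} (hn : 2 ≤ n) :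
    (x ^ (n - 1)) ^ (1 / ((n : ℝ) - 1)) = x := by
  rw [one_div, ← Nat.cast_pred (by omega)]
  exact pow_rpow_inv_natCast hx (by omega)

end Real

variable {n : ℕ} {A : Matrix (Fin n) (Fin n) ℂ}

lemma Matrix.PosDef.phiMap_eq_real_smul (hA : A.PosDef) : PhiMap n A = A.det.re • A⁻¹ := by
  rw [PhiMap, ← Complex.coe_smul, hA.ofReal_re_det]

lemma Matrix.PosDef.phiMap (hA : A.PosDef) : (PhiMap n A).PosDef :=
  hA.phiMap_eq_real_smul ▸ hA.inv.smul hA.re_det_pos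

lemma Matrix.PosDef.psiMap (hA : A.PosDef) : (PsiMap n A).PosDef :=
  hA.inv.smul (Real.rpow_pos_of_pos hA.re_det_pos _)

lemma psiMap_phiMap (hn : 2 ≤ n) (hA : A.PosDef) : PsiMap n (PhiMap n A) = A := by
  set d := A.det.re
  have hd : 0 < d := hA.re_det_pos
  have hdet : d ^ n / d = d ^ (n - 1) := by
    rw [pow_sub₀ d hd.ne' (by omega), pow_one, div_eq_mul_inv]
  rw [PsiMap, hA.phiMap_eq_real_smul, hA.re_det_real_smul_inv, Fintype.card_fin, hdet,
    Real.pow_natCast_sub_one_rpow_one_div hd.le hn, hA.inv_real_smul_inv hd.ne', smul_smul,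
    mul_inv_cancel₀ hd.ne', one_smul]

lemma phiMap_psiMap (hn : 2 ≤ n) (hA : A.PosDef) : PhiMap n (PsiMap n A) = A := by
  set d := A.det.re
  set r := d ^ (1 / ((n : ℝ) - 1))
  have hd : 0 < d := hA.re_det_pos
  have hr : 0 < r := Real.rpow_pos_of_pos hd _
  have hscalar : r ^ n / d * r⁻¹ = 1 := by
    rw [← Nat.sub_add_cancel (by omega : 1 ≤ n), pow_succ,
      Real.rpow_one_div_natCast_sub_one_pow hd.le hn]
    field_simp
  rw [hA.psiMap.phiMap_eq_real_smul, PsiMap, hA.re_det_real_smul_inv, Fintype.card_fin,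
    hA.inv_real_smul_inv hr.ne', smul_smul, hscalar, one_smul]

/-- For `n ≥ 2`: (i) for every positive definite `A`, `Φ(A)` is positive
definite and `Ψ(Φ(A)) = A`; (ii) for every positive definite `B`, `Ψ(B)` is positive
definite and `Φ(Ψ(B)) = B`. Consequently `Φ` is a bijection of the set of positive
definite `n × n` complex matrices onto itself. -/
theorem stmt_3 (n : ℕ) (hn : 2 ≤ n) :
    (∀ A : Matrix (Fin n) (Fin n) ℂ, A.PosDef →
        (PhiMap n A).PosDef ∧ PsiMap n (PhiMap n A) = A) ∧
    (∀ B : Matrix (Fin n) (Fin n) ℂ, B.PosDef →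
        (PsiMap n B).PosDef ∧ PhiMap n (PsiMap n B) = B) ∧
    Set.BijOn (PhiMap n) {A : Matrix (Fin n) (Fin n) ℂ | A.PosDef}
      {A : Matrix (Fin n) (Fin n) ℂ | A.PosDef} :=
  ⟨fun _ hA => ⟨hA.phiMap, psiMap_phiMap hn hA⟩,
    fun _ hB => ⟨hB.psiMap, phiMap_psiMap hn hB⟩,
    Set.InvOn.bijOn ⟨fun _ hA => psiMap_phiMap hn hA, fun _ hB => phiMap_psiMap hn hB⟩
      (fun _ hA => hA.phiMap) (fun _ hB => hB.psiMap)⟩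
end

section
/- Let V be a real vector space, (I, J, K) a quaternionic triple on V, and g an ℝ-bilinear form on V. For ζ ∈ ℂ define the complex-valued bilinear form σ_ζ(x, y) = −2ζ·g(Ix, y) + (1 − ζ²)·g(Jx, y) + √−1·(1 + ζ²)·g(Kx, y) for x, y ∈ V, and define the real endomorphism T_ζ = (1 − |ζ|²)·I + 2·Re(ζ)·J + 2·Im(ζ)·K. Then for all u, v ∈ V: (1 + |ζ|²)·σ_ζ(u, v) + √−1·σ_ζ(T_ζ u, v) = 0. (Equivalently, σ_ζ vanishes on vectors of type (0,1) for the almost complex structure I_ζ = T_ζ/(1 + |ζ|²), i.e. σ_ζ is a form of type (2,0) with respect to I_ζ.) -/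
open Complex

/-- Let `(I, J, K)` be a quaternionic triple on a real vector space `V`
and `g` an ℝ-bilinear form on `V`. For `ζ ∈ ℂ` define
`σ_ζ(x, y) = −2ζ g(Ix,y) + (1 − ζ²) g(Jx,y) + √−1(1 + ζ²) g(Kx,y)` and the real
endomorphism `T_ζ = (1 − |ζ|²) I + 2 Re(ζ) J + 2 Im(ζ) K`. Then for all `u, v ∈ V`:
`(1 + |ζ|²) σ_ζ(u, v) + √−1 σ_ζ(T_ζ u, v) = 0`; equivalently, `σ_ζ` is of type `(2,0)`
with respect to the almost complex structure `I_ζ = T_ζ/(1 + |ζ|²)`. -/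
theorem stmt_14 (V : Type*) [AddCommGroup V] [Module ℝ V]
    (I J K : Module.End ℝ V)
    (hI : I * I = -1) (hJ : J * J = -1) (hK : K * K = -1)
    (hIJ : I * J = K) (hJK : J * K = I) (hKI : K * I = J)
    (g : V →ₗ[ℝ] V →ₗ[ℝ] ℝ) (ζ : ℂ) :
    ∀ u v : V,
      (1 + (Complex.normSq ζ : ℂ)) *
          (-2 * ζ * (g (I u) v : ℂ) + (1 - ζ ^ 2) * (g (J u) v : ℂ)
            + Complex.I * (1 + ζ ^ 2) * (g (K u) v : ℂ))
        + Complex.I *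
          (-2 * ζ * (g (I (((1 - Complex.normSq ζ) • I + (2 * ζ.re) • J + (2 * ζ.im) • K) u)) v : ℂ)
            + (1 - ζ ^ 2) * (g (J (((1 - Complex.normSq ζ) • I + (2 * ζ.re) • J + (2 * ζ.im) • K) u)) v : ℂ)
            + Complex.I * (1 + ζ ^ 2) * (g (K (((1 - Complex.normSq ζ) • I + (2 * ζ.re) • J + (2 * ζ.im) • K) u)) v : ℂ))
        = 0 := by
  -- derived quaternion relations
  have hJI : J * I = -K := by
    have : (K * I) * I = K * (I * I) := (mul_assoc _ _ _)
    rw [hKI, hI] at this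
    rw [this, mul_neg_one]
  have hIK : I * K = -J := by
    have : (J * K) * K = J * (K * K) := (mul_assoc _ _ _)
    rw [hJK, hK] at this
    rw [this, mul_neg_one]
  have hKJ : K * J = -I := by
    have : (I * J) * J = I * (J * J) := (mul_assoc _ _ _)
    rw [hIJ, hJ] at this
    rw [this, mul_neg_one]
  intro u v
  have app : ∀ (A B : Module.End ℝ V) (x : V), A (B x) = (A * B) x := fun _ _ _ => rfl
  -- expand T u
  have hTI : I (((1 - Complex.normSq ζ) • I + (2 * ζ.re) • J + (2 * ζ.im) • K) u)
      = (1 - Complex.normSq ζ) • (-u) + (2 * ζ.re) • K u + (2 * ζ.im) • (-(J u)) := by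
    simp only [LinearMap.add_apply, LinearMap.smul_apply, map_add, map_smul,
      app I I, app I J, app I K, hI, hIJ, hIK]
    simp
  have hTJ : J (((1 - Complex.normSq ζ) • I + (2 * ζ.re) • J + (2 * ζ.im) • K) u)
      = (1 - Complex.normSq ζ) • (-(K u)) + (2 * ζ.re) • (-u) + (2 * ζ.im) • I u := by
    simp only [LinearMap.add_apply, LinearMap.smul_apply, map_add, map_smul,
      app J I, app J J, app J K, hJ, hJI, hJK]
    simp
  have hTK : K (((1 - Complex.normSq ζ) • I + (2 * ζ.re) • J + (2 * ζ.im) • K) u)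
      = (1 - Complex.normSq ζ) • J u + (2 * ζ.re) • (-(I u)) + (2 * ζ.im) • (-u) := by
    simp only [LinearMap.add_apply, LinearMap.smul_apply, map_add, map_smul,
      app K I, app K J, app K K, hK, hKI, hKJ]
    simp
  rw [hTI, hTJ, hTK]
  simp only [map_add, map_smul, map_neg, LinearMap.add_apply, LinearMap.smul_apply,
    LinearMap.neg_apply, smul_eq_mul]
  simp only [pow_two, Complex.ext_iff, Complex.normSq_apply, Complex.add_re, Complex.add_im,
    Complex.mul_re, Complex.mul_im, Complex.sub_re, Complex.sub_im, Complex.neg_re,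
    Complex.neg_im, Complex.one_re, Complex.one_im, Complex.I_re, Complex.I_im,
    Complex.ofReal_re, Complex.ofReal_im, Complex.zero_re, Complex.zero_im,
    Complex.re_ofNat, Complex.im_ofNat]
  constructor <;> ring
end

section
/- Let R be a commutative ring, M an R-module, and Λ(M) its exterior algebra. Let n ≥ 1, let e₁, …, eₙ, f₁, …, fₙ ∈ M, and let a = (a_{jk}) be an n × n matrix over R. Set ω = Σ_{j,k=1}^{n} a_{jk} · (e_j ∧ f_k) ∈ Λ²(M). Then for all indices 1 ≤ k, ℓ ≤ n: ω^(n−1) ∧ e_k ∧ f_ℓ = (n−1)! · adj(a)_{ℓk} · (e₁ ∧ f₁ ∧ e₂ ∧ f₂ ∧ ⋯ ∧ eₙ ∧ fₙ), where adj(a) is the adjugate matrix of a (so adj(a)_{ℓk} = (−1)^{k+ℓ} times the (k,ℓ) minor of a). In particular ω^n = n! · det(a) · (e₁ ∧ f₁ ∧ ⋯ ∧ eₙ ∧ fₙ). -/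
/-!
Products `x ∧ y` of two vectors commute with each other, so they generate a commutative
subalgebra of `Λ(M)`. There, with `g_j = Σ_k a_{jk} f_k`, the form `ω = Σ_j e_j ∧ g_j` is a sum of
square-zero elements, hence `ω^m = m! · Σ_{|T| = m} Π_{j ∈ T} e_j ∧ g_j`. Multiplying `ω^(n-1)` by
`e_k ∧ f_ℓ` kills every term containing `e_k ∧ g_k`, leaving `(n-1)! · Π_j e_j ∧ g'_j`, where `g'`
is `g` with `g_k` replaced by `f_ℓ`. Finally `g ↦ Π_j e_j ∧ g_j` is alternating, so it scales by
`det b` when `g` is replaced by the rows of a matrix `b` applied to `f`; for `g'` this matrix is `a`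
with row `k` replaced by the `ℓ`-th unit vector, whose determinant is `adj(a)_{ℓk}`.
-/

open Finset
open scoped Nat IsMulCommutative

theorem AlternatingMap.map_matrix_sum_smul {R M N ι : Type*} [CommRing R] [AddCommGroup M]
    [Module R M] [AddCommGroup N] [Module R N] [Fintype ι] [DecidableEq ι]
    (f : M [⋀^ι]→ₗ[R] N) (b : Matrix ι ι R) (v : ι → M) :
    f (fun i => ∑ j, b i j • v j) = b.det • f v := by
  -- both sides are alternating in the rows of `b` and agree on permutations of the standard basis
  have h : f.compLinearMap (Fintype.linearCombination R v) =
      (Pi.basisFun R ι).det.smulRight (f v) := by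
    refine (Pi.basisFun R ι).ext_alternating fun i hi => ?_
    obtain ⟨σ, rfl⟩ : ∃ σ : Equiv.Perm ι, ⇑σ = i :=
      ⟨Equiv.ofBijective i (Finite.injective_iff_bijective.1 hi), rfl⟩
    have h1 := (f.compLinearMap (Fintype.linearCombination R v)).map_perm (Pi.basisFun R ι) σ
    have h2 := ((Pi.basisFun R ι).det.smulRight (f v)).map_perm (Pi.basisFun R ι) σ
    simp only [Function.comp_def] at h1 h2
    rw [h1, h2, AlternatingMap.smulRight_apply, Module.Basis.det_self, one_smul]
    simp
  have := congr($h fun i j => b i j)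
  rw [AlternatingMap.smulRight_apply, Pi.basisFun_det] at this
  simp only [AlternatingMap.compLinearMap_apply, Fintype.linearCombination_apply] at this
  exact this

theorem AlternatingMap.map_update_matrix_sum_smul {R M N ι : Type*} [CommRing R]
    [AddCommGroup M] [Module R M] [AddCommGroup N] [Module R N] [Fintype ι] [DecidableEq ι]
    (f : M [⋀^ι]→ₗ[R] N) (a : Matrix ι ι R) (v : ι → M) (k ℓ : ι) :
    f (Function.update (fun i => ∑ j, a i j • v j) k (v ℓ)) = a.adjugate ℓ k • f v := by
  have : Function.update (fun i => ∑ j, a i j • v j) k (v ℓ) =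
      fun i => ∑ j, a.updateRow k (Pi.single ℓ 1) i j • v j := by
    funext i
    rcases eq_or_ne i k with rfl | hik
    · simp [Pi.single_apply]
    · simp [hik]
  rw [this, map_matrix_sum_smul, Matrix.adjugate_apply]

theorem add_pow_succ_of_sq_eq_zero {A : Type*} [CommSemiring A] {x : A} (hx : x ^ 2 = 0)
    (y : A) (m : ℕ) : (x + y) ^ (m + 1) = y ^ (m + 1) + (m + 1) • (x * y ^ m) := by
  induction m with
  | zero => simp [add_comm]
  | succ m ih =>
    calc (x + y) ^ (m + 2) = (y ^ (m + 1) + (m + 1) • (x * y ^ m)) * (x + y) := by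
          rw [pow_succ, ih]
      _ = y ^ (m + 2) + (m + 2) • (x * y ^ (m + 1)) + (m + 1) • (x ^ 2 * y ^ m) := by
          simp only [nsmul_eq_mul]; push_cast; ring
      _ = _ := by rw [hx, zero_mul, smul_zero, add_zero]

theorem Finset.sum_pow_eq_factorial_smul_sum_powersetCard {A ι : Type*} [CommSemiring A]
    [DecidableEq ι] {s : Finset ι} {x : ι → A} (hx : ∀ i ∈ s, x i ^ 2 = 0) (m : ℕ) :
    (∑ i ∈ s, x i) ^ m = m ! • ∑ t ∈ s.powersetCard m, ∏ i ∈ t, x i := by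
  induction s using Finset.induction_on generalizing m with
  | empty =>
    obtain _ | m := m
    · simp
    · rw [powersetCard_eq_empty.2 (Nat.succ_pos m)]; simp
  | insert a s ha ih =>
    obtain _ | m := m
    · simp
    have hs : ∀ i ∈ s, x i ^ 2 = 0 := fun i hi => hx i (mem_insert_of_mem hi)
    have hdisj : Disjoint (s.powersetCard (m + 1)) ((s.powersetCard m).image (insert a)) := by
      refine disjoint_left.2 fun t ht ht' => ha ?_
      obtain ⟨u, -, rfl⟩ := mem_image.1 ht'
      exact (mem_powersetCard.1 ht).1 (mem_insert_self a u)
    have hinj : Set.InjOn (insert a) (s.powersetCard m : Set (Finset ι)) := by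
      intro t ht u hu htu
      have hat : a ∉ t := fun h => ha ((mem_powersetCard.1 ht).1 h)
      have hau : a ∉ u := fun h => ha ((mem_powersetCard.1 hu).1 h)
      rw [← erase_insert hat, htu, erase_insert hau]
    have hins : ∀ t ∈ s.powersetCard m, ∏ i ∈ insert a t, x i = x a * ∏ i ∈ t, x i :=
      fun t ht => prod_insert fun h => ha ((mem_powersetCard.1 ht).1 h)
    rw [sum_insert ha, add_pow_succ_of_sq_eq_zero (hx a (mem_insert_self a s)), ih hs, ih hs,
      powersetCard_succ_insert ha, sum_union hdisj, sum_image hinj, sum_congr rfl hins,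
      ← mul_sum, Nat.factorial_succ]
    simp only [nsmul_eq_mul]
    push_cast
    ring

theorem Finset.sum_pow_card_eq_factorial_smul_prod {A ι : Type*} [CommSemiring A]
    [DecidableEq ι] {s : Finset ι} {x : ι → A} (hx : ∀ i ∈ s, x i ^ 2 = 0) :
    (∑ i ∈ s, x i) ^ #s = (#s)! • ∏ i ∈ s, x i := by
  rw [sum_pow_eq_factorial_smul_sum_powersetCard hx, powersetCard_self, sum_singleton]

theorem Finset.sum_prod_powersetCard_pred_mul_eq_prod_update {A ι : Type*} [CommSemiring A]
    [Fintype ι] [DecidableEq ι] {x : ι → A} {y : A} {k : ι} (hk : x k * y = 0) :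
    (∑ t ∈ univ.powersetCard (Fintype.card ι - 1), ∏ i ∈ t, x i) * y =
      ∏ i, Function.update x k y i := by
  have hmem : univ.erase k ∈ univ.powersetCard (Fintype.card ι - 1) :=
    mem_powersetCard.2 ⟨subset_univ _, by rw [card_erase_of_mem (mem_univ k), card_univ]⟩
  rw [sum_mul, sum_eq_single_of_mem _ hmem, Finset.prod_update_of_mem (mem_univ k),
    sdiff_singleton_eq_erase, mul_comm]
  intro t ht hne
  obtain ⟨-, hcard⟩ := mem_powersetCard.1 ht
  have hkt : k ∈ t := by
    by_contra hkt
    refine hne (eq_of_subset_of_card_le (fun i hi => mem_erase.2 ⟨?_, mem_univ i⟩) ?_)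
    · rintro rfl; exact hkt hi
    · rw [hcard, card_erase_of_mem (mem_univ k), card_univ]
  rw [← mul_prod_erase t x hkt, mul_right_comm, hk, zero_mul]

namespace ExteriorAlgebra

variable (R : Type*) [CommRing R] {M : Type*} [AddCommGroup M] [Module R M]

theorem ι_mul_ι_comm (x y : M) : ι R x * ι R y = -(ι R y * ι R x) :=
  eq_neg_of_add_eq_zero_left (ι_add_mul_swap x y)

theorem commute_ι_ι_mul_ι (x y z : M) : Commute (ι R x) (ι R y * ι R z) := by
  calc ι R x * (ι R y * ι R z) = -(ι R y * ι R x * ι R z) := by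
        rw [← mul_assoc, ι_mul_ι_comm R x y, neg_mul]
    _ = ι R y * ι R z * ι R x := by
        rw [mul_assoc, ι_mul_ι_comm R x z, mul_neg, neg_neg, mul_assoc]

variable (M) in
def bivectorSubalgebra : Subalgebra R (ExteriorAlgebra R M) :=
  Algebra.adjoin R (Set.range fun p : M × M => ι R p.1 * ι R p.2)

instance : IsMulCommutative (bivectorSubalgebra R M) :=
  Algebra.isMulCommutative_adjoin R <| by
    rintro _ ⟨⟨w, x⟩, rfl⟩ _ ⟨⟨y, z⟩, rfl⟩
    exact ((commute_ι_ι_mul_ι R w y z).mul_left (commute_ι_ι_mul_ι R x y z)).eq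

variable {R}

def wedge (x : M) : M →ₗ[R] bivectorSubalgebra R M :=
  (LinearMap.mulLeft R (ι R x) ∘ₗ ι R).codRestrict (bivectorSubalgebra R M).toSubmodule
    fun y => Algebra.subset_adjoin ⟨(x, y), rfl⟩

@[simp]
theorem coe_wedge (x y : M) : (wedge (R := R) x y : ExteriorAlgebra R M) = ι R x * ι R y := rfl

theorem wedge_mul_wedge_self_left (x y z : M) : wedge (R := R) x y * wedge x z = 0 :=
  Subtype.ext <| by
    rw [Subalgebra.coe_mul, coe_wedge, coe_wedge, mul_assoc, (commute_ι_ι_mul_ι R y x z).eq,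
      ← mul_assoc, ← mul_assoc, ι_sq_zero, zero_mul, zero_mul, ZeroMemClass.coe_zero]

theorem wedge_mul_wedge_self_right (x y z : M) : wedge (R := R) x z * wedge y z = 0 :=
  Subtype.ext <| by
    rw [Subalgebra.coe_mul, coe_wedge, coe_wedge, mul_assoc, (commute_ι_ι_mul_ι R z y z).eq,
      mul_assoc, ι_sq_zero, mul_zero, mul_zero, ZeroMemClass.coe_zero]

theorem wedge_sq (x y : M) : wedge (R := R) x y ^ 2 = 0 :=
  (sq _).trans (wedge_mul_wedge_self_left x y y)

variable {ι : Type*} [Fintype ι]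

def wedgeProd (e : ι → M) : M [⋀^ι]→ₗ[R] bivectorSubalgebra R M :=
  { (MultilinearMap.mkPiAlgebra R ι (bivectorSubalgebra R M)).compLinearMap
      fun i => wedge (e i) with
    map_eq_zero_of_eq' := fun v i j hv hij => by
      classical
      simp only [MultilinearMap.toFun_eq_coe, MultilinearMap.compLinearMap_apply,
        MultilinearMap.mkPiAlgebra_apply]
      rw [← prod_mul_prod_compl {i, j}, prod_pair hij, hv, wedge_mul_wedge_self_right, zero_mul] }

theorem wedgeProd_apply (e v : ι → M) :
    wedgeProd (R := R) e v = ∏ i, wedge (e i) (v i) := rfl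

variable [DecidableEq ι]

theorem sum_wedge_pow_card (e g : ι → M) :
    (∑ i, wedge (R := R) (e i) (g i)) ^ Fintype.card ι = (Fintype.card ι)! • wedgeProd e g := by
  have hx : ∀ i ∈ (univ : Finset ι), wedge (R := R) (e i) (g i) ^ 2 = 0 := fun i _ => wedge_sq _ _
  rw [← Finset.card_univ, sum_pow_card_eq_factorial_smul_prod hx, wedgeProd_apply]

theorem sum_wedge_pow_pred_mul_wedge (e g : ι → M) (k : ι) (y : M) :
    (∑ i, wedge (R := R) (e i) (g i)) ^ (Fintype.card ι - 1) * wedge (e k) y =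
      (Fintype.card ι - 1)! • wedgeProd e (Function.update g k y) := by
  have hx : ∀ i ∈ (univ : Finset ι), wedge (R := R) (e i) (g i) ^ 2 = 0 := fun i _ => wedge_sq _ _
  have hk : wedge (R := R) (e k) (g k) * wedge (e k) y = 0 := wedge_mul_wedge_self_left _ _ _
  rw [sum_pow_eq_factorial_smul_sum_powersetCard hx, smul_mul_assoc,
    sum_prod_powersetCard_pred_mul_eq_prod_update (x := fun i => wedge (e i) (g i)) hk,
    wedgeProd_apply]
  congr 2
  funext i
  exact (Function.apply_update (fun i => wedge (e i)) g k y i).symm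

end ExteriorAlgebra

open ExteriorAlgebra

theorem stmt_19_general (R : Type*) [CommRing R] (M : Type*) [AddCommGroup M] [Module R M]
    (n : ℕ) (e f : Fin n → M) (a : Matrix (Fin n) (Fin n) R) :
    let ι' : M → ExteriorAlgebra R M := ExteriorAlgebra.ι R
    let ω : ExteriorAlgebra R M :=
      ∑ j : Fin n, ∑ k : Fin n, a j k • (ι' (e j) * ι' (f k))
    let vol : ExteriorAlgebra R M := (List.ofFn fun j : Fin n => ι' (e j) * ι' (f j)).prod
    (∀ k ℓ : Fin n,
      ω ^ (n - 1) * (ι' (e k) * ι' (f ℓ)) = (n - 1).factorial • (a.adjugate ℓ k • vol)) ∧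
    ω ^ n = n.factorial • (a.det • vol) := by
  intro ι' ω vol
  set g : Fin n → M := fun j => ∑ k, a j k • f k
  have hω : ω = ((∑ j, wedge (e j) (g j) : bivectorSubalgebra R M) : ExteriorAlgebra R M) := by
    simp [ω, g, ι']
  have hvol : vol = (wedgeProd (R := R) e f : ExteriorAlgebra R M) := by
    simp [vol, ι', wedgeProd_apply, ← List.prod_ofFn, Function.comp_def]
  refine ⟨fun k ℓ => ?_, ?_⟩
  · have h := sum_wedge_pow_pred_mul_wedge (R := R) e g k (f ℓ)
    rw [Fintype.card_fin, AlternatingMap.map_update_matrix_sum_smul] at h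
    rw [hω, hvol, ← coe_wedge, ← Subalgebra.coe_pow, ← Subalgebra.coe_mul, h]
    simp
  · have h := sum_wedge_pow_card (R := R) e g
    rw [Fintype.card_fin, AlternatingMap.map_matrix_sum_smul] at h
    rw [hω, hvol, ← Subalgebra.coe_pow, h]
    simp

/-- Let `R` be a commutative ring, `M` an `R`-module, `Λ(M)` its
exterior algebra, `e₁, …, eₙ, f₁, …, fₙ ∈ M` and `a` an `n × n` matrix over `R`. Set
`ω = Σ_{j,k} a_{jk} (e_j ∧ f_k)`. Then for all `k, ℓ`:
`ω^(n−1) ∧ e_k ∧ f_ℓ = (n−1)! · adj(a)_{ℓk} · (e₁ ∧ f₁ ∧ ⋯ ∧ eₙ ∧ fₙ)`,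
and in particular `ω^n = n! · det(a) · (e₁ ∧ f₁ ∧ ⋯ ∧ eₙ ∧ fₙ)`. -/
theorem stmt_19 (R : Type*) [CommRing R] (M : Type*) [AddCommGroup M] [Module R M]
    (n : ℕ) (hn : 1 ≤ n) (e f : Fin n → M) (a : Matrix (Fin n) (Fin n) R) :
    let ι' : M → ExteriorAlgebra R M := ExteriorAlgebra.ι R
    let ω : ExteriorAlgebra R M :=
      ∑ j : Fin n, ∑ k : Fin n, a j k • (ι' (e j) * ι' (f k))
    let vol : ExteriorAlgebra R M := (List.ofFn fun j : Fin n => ι' (e j) * ι' (f j)).prod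
    (∀ k ℓ : Fin n,
      ω ^ (n - 1) * (ι' (e k) * ι' (f ℓ)) = (n - 1).factorial • (a.adjugate ℓ k • vol)) ∧
    ω ^ n = n.factorial • (a.det • vol) :=
  stmt_19_general R M n e f a
end
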